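/- Let G be a graph with at least one edge and fix an edge j ∈ E. Then there exist constants C > 0 and a positive integer w, depending only on G, such that for all x ≥ 3, Σ |μ(n_1)⋯μ(n_e)| ∏_{r=1}^{v} 1/N_r ≤ C·(log log x)^w / x, where the sum extends over all edge numberings (n_a) of G with n_j > x. -/

import Mathlib

open scoped BigOperators Classical

noncomputable section

def vertexNum (v : ℕ) (E : Finset (Sym2 (Fin v))) (n : {a : Sym2 (Fin v) // a ∈ E} → ℕ+)
    (r : Fin v) : ℕ :=
  (E.attach.filter fun a => r ∈ a.1).lcm fun a => (n a : ℕ)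

/-!
Fix a squarefree numbering, put `u = n_j` and let `L` be the lcm of the other edge numbers. A prime
dividing `u` or `L` divides `N_r` at both ends of an edge carrying it, and a prime dividing both
also divides `N_r` at a vertex of another edge lying off `j`; hence `u L lcm(u, L) ∣ ∏ N_r`. At
most `d(L)^(e-1)` numberings share the pair `(u, L)`, and `d(L)^(e-1) ≪ √L` as `L` is squarefree.
Writing `1 / (u L lcm(u, L)) = gcd(u, L) / (u L)²` and `gcd(u, L) ≤ ∑_{t ∣ u, t ∣ L} t`, the sum
is `≪ ∑_t t (∑_{t ∣ u > x} u⁻²) (∑_{t ∣ L} L^(-3/2)) ≪ ∑_t t (t x)⁻¹ t^(-3/2) ≪ 1 / x`.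
-/

open Finset
open scoped ENNReal

theorem Sym2.exists_mem_notMem_of_ne {α : Type*} {s t : Sym2 α} (ht : ¬ t.IsDiag) (hst : s ≠ t) :
    ∃ r ∈ t, r ∉ s := by
  induction t using Sym2.ind with
  | h a b =>
    by_contra! h
    exact hst ((Sym2.mem_and_mem_iff (by simpa using ht)).1
      ⟨h a (Sym2.mem_mk_left a b), h b (Sym2.mem_mk_right a b)⟩)

theorem Nat.card_filter_dvd_le_factorization_prod {ι : Type*} (s : Finset ι) {f : ι → ℕ}
    (hf : ∀ i ∈ s, f i ≠ 0) {p : ℕ} (hp : p.Prime) :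
    #{i ∈ s | p ∣ f i} ≤ (∏ i ∈ s, f i).factorization p := by
  rw [Nat.factorization_prod hf, Finsupp.finsetSum_apply, card_filter]
  refine sum_le_sum fun i hi => ?_
  split_ifs with h
  · exact (hp.dvd_iff_one_le_factorization (hf i hi)).1 h
  · exact Nat.zero_le _

theorem Nat.squarefree_finsetLcm {ι : Type*} {s : Finset ι} {f : ι → ℕ}
    (h : ∀ i ∈ s, Squarefree (f i)) : Squarefree (s.lcm f) := by
  have hf : ∀ i ∈ s, f i ≠ 0 := fun i hi => (h i hi).ne_zero
  refine (Nat.squarefree_iff_factorization_le_one (by simpa [Finset.lcm_eq_zero_iff] using hf)).2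
    fun p => ?_
  rw [Finset.factorization_lcm hf]
  exact Finset.sup_le fun i hi => (h i hi).natFactorization_le_one p

theorem Nat.card_divisors_of_squarefree {n : ℕ} (hn : Squarefree n) :
    #n.divisors = 2 ^ #n.primeFactors := by
  rw [Nat.card_divisors hn.ne_zero, ← prod_const]
  refine prod_congr rfl fun p hp => ?_
  have h1 := hn.natFactorization_le_one p
  have h2 : n.factorization p ≠ 0 := Finsupp.mem_support_iff.1 (n.support_factorization ▸ hp)
  omega

/-- At most `k ^ 2` prime factors lie below `k ^ 2`, and each larger one exceeds `k ^ 2`. -/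
theorem Nat.pow_card_primeFactors_sq_le {k n : ℕ} (hk : 1 ≤ k) (hn : n ≠ 0) :
    (k ^ #n.primeFactors) ^ 2 ≤ k ^ (2 * k ^ 2) * n := by
  set S := n.primeFactors.filter (· < k ^ 2)
  set T := n.primeFactors.filter (¬ · < k ^ 2)
  have hST : #S + #T = #n.primeFactors := card_filter_add_card_filter_not _
  have hS : #S ≤ k ^ 2 := by
    simpa using card_le_card fun p hp => mem_range.2 (mem_filter.1 hp).2
  have hT : (k ^ 2) ^ #T ≤ ∏ p ∈ T, p :=
    pow_card_le_prod _ _ _ fun p hp => not_lt.1 (mem_filter.1 hp).2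
  have hTn : ∏ p ∈ T, p ≤ n :=
    Nat.le_of_dvd (Nat.pos_of_ne_zero hn)
      ((prod_dvd_prod_of_subset _ _ _ (filter_subset _ _)).trans (Nat.prod_primeFactors_dvd n))
  calc (k ^ #n.primeFactors) ^ 2 = k ^ (2 * #S) * (k ^ 2) ^ #T := by
        rw [← hST, ← pow_mul, ← pow_mul, ← pow_add]; ring_nf
    _ ≤ k ^ (2 * k ^ 2) * n :=
        Nat.mul_le_mul (Nat.pow_le_pow_right hk (by omega)) (hT.trans hTn)

theorem exists_card_divisors_pow_le_mul_sqrt (c : ℕ) :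
    ∃ K : ℝ, 0 ≤ K ∧ ∀ n : ℕ, Squarefree n → (#n.divisors : ℝ) ^ c ≤ K * √n := by
  refine ⟨(2 ^ c : ℝ) ^ (2 ^ c) ^ 2, by positivity, fun n hn => ?_⟩
  have key := Nat.pow_card_primeFactors_sq_le (k := 2 ^ c) Nat.one_le_two_pow hn.ne_zero
  rw [← pow_le_pow_iff_left₀ (by positivity) (by positivity) two_ne_zero, mul_pow,
    Real.sq_sqrt n.cast_nonneg, Nat.card_divisors_of_squarefree hn]
  calc (((2 ^ #n.primeFactors : ℕ) : ℝ) ^ c) ^ 2 = (((2 ^ c) ^ #n.primeFactors) ^ 2 : ℕ) := by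
        push_cast; ring
    _ ≤ ((2 ^ c) ^ (2 * (2 ^ c) ^ 2) * n : ℕ) := by exact_mod_cast key
    _ = ((2 ^ c : ℝ) ^ (2 ^ c) ^ 2) ^ 2 * n := by push_cast; ring

theorem tsum_comp_mul_left_eq_of_dvd {α : Type*} [AddCommMonoid α] [TopologicalSpace α] {t : ℕ}
    (ht : t ≠ 0) {f : ℕ → α} (hf : ∀ n, ¬ t ∣ n → f n = 0) :
    ∑' m, f (t * m) = ∑' n, f n :=
  (mul_right_injective₀ ht).tsum_eq fun n hn => by
    obtain ⟨m, rfl⟩ := not_not.1 (mt (hf n) hn)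
    exact ⟨m, rfl⟩

theorem ENNReal.tsum_ite_forall_mem {α β : Type*} [DecidableEq α] [Fintype β] (s : Finset α)
    (a : ℝ≥0∞) :
    ∑' d : β → α, (if ∀ b, d b ∈ s then a else 0) = (#s : ℝ≥0∞) ^ Fintype.card β * a := by
  rw [tsum_eq_sum (s := Fintype.piFinset fun _ => s) fun d hd =>
      if_neg fun h => hd (Fintype.mem_piFinset.2 h),
    sum_congr rfl fun d hd => if_pos (Fintype.mem_piFinset.1 hd), sum_const,
    Fintype.card_piFinset, prod_const, card_univ, nsmul_eq_mul]
  push_cast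
  rfl

theorem Real.tsum_le_of_tsum_ofReal_le {α : Type*} {f : α → ℝ} (hf : ∀ a, 0 ≤ f a) {B : ℝ}
    (hB : 0 ≤ B) (h : ∑' a, ENNReal.ofReal (f a) ≤ ENNReal.ofReal B) : ∑' a, f a ≤ B := by
  have := ENNReal.tsum_toReal_eq (f := fun a => ENNReal.ofReal (f a)) fun _ => ENNReal.ofReal_ne_top
  simp only [ENNReal.toReal_ofReal (hf _)] at this
  exact this ▸ ENNReal.toReal_le_of_le_ofReal hB h

theorem ENNReal.tsum_ofReal_inv_sq_tail_le {y : ℝ} (hy : 0 < y) :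
    ∑' m : ℕ, (if y < m then ENNReal.ofReal ((m : ℝ) ^ 2)⁻¹ else 0) ≤ ENNReal.ofReal (2 / y) := by
  refine ENNReal.tsum_le_of_sum_range_le fun N => ?_
  rw [← sum_filter, ← ENNReal.ofReal_sum_of_nonneg fun m _ => by positivity]
  refine ENNReal.ofReal_le_ofReal ?_
  have hsub : (range N).filter (fun m : ℕ => y < m) ⊆ Ioo ⌊y⌋₊ N := fun m hm => by
    simp only [mem_filter, mem_range] at hm
    exact mem_Ioo.2 ⟨(Nat.floor_lt hy.le).2 hm.2, hm.1⟩
  calc ∑ m ∈ (range N).filter (fun m : ℕ => y < m), ((m : ℝ) ^ 2)⁻¹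
      ≤ ∑ m ∈ Ioo ⌊y⌋₊ N, ((m : ℝ) ^ 2)⁻¹ :=
        sum_le_sum_of_subset_of_nonneg hsub fun _ _ _ => by positivity
    _ ≤ 2 / (⌊y⌋₊ + 1) := sum_Ioo_inv_sq_le _ _
    _ ≤ 2 / y := div_le_div_of_nonneg_left zero_le_two hy (Nat.lt_floor_add_one y).le

theorem ENNReal.tsum_ofReal_inv_sq_dvd_tail_le {t : ℕ} (ht : t ≠ 0) {x : ℝ} (hx : 0 < x) :
    ∑' u : ℕ, (if x < u ∧ t ∣ u then ENNReal.ofReal ((u : ℝ) ^ 2)⁻¹ else 0) ≤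
      ENNReal.ofReal (2 / (t * x)) := by
  have htpos : (0 : ℝ) < t := by positivity
  rw [← tsum_comp_mul_left_eq_of_dvd ht fun n hn => if_neg fun h => hn h.2]
  calc ∑' m : ℕ, (if x < ((t * m : ℕ) : ℝ) ∧ t ∣ t * m
          then ENNReal.ofReal (((t * m : ℕ) : ℝ) ^ 2)⁻¹ else 0)
      = ∑' m : ℕ, ENNReal.ofReal ((t : ℝ) ^ 2)⁻¹ *
          (if x / t < m then ENNReal.ofReal ((m : ℝ) ^ 2)⁻¹ else 0) := by
        refine tsum_congr fun m => ?_
        simp only [dvd_mul_right, and_true, Nat.cast_mul, div_lt_iff₀' htpos]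
        split_ifs
        · rw [← ENNReal.ofReal_mul (by positivity), mul_pow, mul_inv]
        · rw [mul_zero]
    _ ≤ ENNReal.ofReal ((t : ℝ) ^ 2)⁻¹ * ENNReal.ofReal (2 / (x / t)) := by
        rw [ENNReal.tsum_mul_left]
        gcongr
        exact ENNReal.tsum_ofReal_inv_sq_tail_le (by positivity)
    _ = ENNReal.ofReal (2 / (t * x)) := by
        rw [← ENNReal.ofReal_mul (by positivity)]
        congr 1
        field_simp

theorem ENNReal.tsum_ofReal_rpow_dvd {t : ℕ} (ht : t ≠ 0) (s : ℝ) :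
    ∑' n : ℕ, (if t ∣ n then ENNReal.ofReal ((n : ℝ) ^ s) else 0) =
      ENNReal.ofReal ((t : ℝ) ^ s) * ∑' m : ℕ, ENNReal.ofReal ((m : ℝ) ^ s) := by
  rw [← tsum_comp_mul_left_eq_of_dvd ht fun n hn => if_neg hn, ← ENNReal.tsum_mul_left]
  refine tsum_congr fun m => ?_
  rw [if_pos (dvd_mul_right t m), Nat.cast_mul, Real.mul_rpow (by positivity) (by positivity),
    ENNReal.ofReal_mul (by positivity)]

section VertexNumbering

variable {v : ℕ} {E : Finset (Sym2 (Fin v))} (n : E → ℕ+)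

theorem dvd_vertexNum {a : E} {r : Fin v} (hr : r ∈ a.1) : (n a : ℕ) ∣ vertexNum v E n r :=
  dvd_lcm (mem_filter.2 ⟨mem_attach _ _, hr⟩)

theorem vertexNum_ne_zero (r : Fin v) : vertexNum v E n r ≠ 0 := by
  simp [vertexNum, Finset.lcm_eq_zero_iff]

theorem prod_vertexNum_pos : 0 < ∏ r, vertexNum v E n r :=
  prod_pos fun r _ => Nat.pos_of_ne_zero (vertexNum_ne_zero n r)

variable {n}

theorem two_le_card_dvd_vertexNum (hE : ∀ a ∈ E, ¬ a.IsDiag) {p : ℕ} {a : E} (hp : p ∣ n a) :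
    2 ≤ #{r | p ∣ vertexNum v E n r} := by
  obtain ⟨⟨⟨r₁, r₂⟩⟩, ha⟩ := a
  refine one_lt_card.2 ⟨r₁, ?_, r₂, ?_, by simpa using hE _ ha⟩ <;> rw [mem_filter_univ]
  · exact hp.trans (dvd_vertexNum n (Sym2.mem_mk_left r₁ r₂))
  · exact hp.trans (dvd_vertexNum n (Sym2.mem_mk_right r₁ r₂))

theorem three_le_card_dvd_vertexNum (hE : ∀ a ∈ E, ¬ a.IsDiag) {p : ℕ} {a b : E} (hab : a ≠ b)
    (ha : p ∣ n a) (hb : p ∣ n b) : 3 ≤ #{r | p ∣ vertexNum v E n r} := by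
  obtain ⟨r₃, hr₃b, hr₃a⟩ := Sym2.exists_mem_notMem_of_ne (hE _ b.2) (Subtype.coe_ne_coe.2 hab)
  obtain ⟨⟨⟨r₁, r₂⟩⟩, ha'⟩ := a
  have hr₁ : r₁ ≠ r₃ := by rintro rfl; exact hr₃a (Sym2.mem_mk_left _ _)
  have hr₂ : r₂ ≠ r₃ := by rintro rfl; exact hr₃a (Sym2.mem_mk_right _ _)
  refine two_lt_card.2 ⟨r₁, ?_, r₂, ?_, r₃, ?_, by simpa using hE _ ha', hr₁, hr₂⟩ <;>
    rw [mem_filter_univ]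
  · exact ha.trans (dvd_vertexNum n (Sym2.mem_mk_left r₁ r₂))
  · exact ha.trans (dvd_vertexNum n (Sym2.mem_mk_right r₁ r₂))
  · exact hb.trans (dvd_vertexNum n hr₃b)

theorem mul_mul_lcm_dvd_prod_vertexNum (hE : ∀ a ∈ E, ¬ a.IsDiag) (j : E)
    (hsq : ∀ a, Squarefree (n a : ℕ)) :
    (n j : ℕ) * (univ.erase j).lcm (fun a => (n a : ℕ)) *
        Nat.lcm (n j) ((univ.erase j).lcm fun a => (n a : ℕ)) ∣ ∏ r, vertexNum v E n r := by
  set u : ℕ := (n j : ℕ)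
  set L := (univ.erase j).lcm fun a => (n a : ℕ)
  have hu : u ≠ 0 := (n j).ne_zero
  have hLsq : Squarefree L := Nat.squarefree_finsetLcm fun a _ => hsq a
  have hL : L ≠ 0 := hLsq.ne_zero
  rw [← Nat.factorization_le_iff_dvd
    (mul_ne_zero (mul_ne_zero hu hL) (Nat.lcm_ne_zero hu hL))
    (prod_vertexNum_pos n).ne']
  intro p
  by_cases hp : p.Prime
  swap
  · simp [Nat.factorization_eq_zero_of_not_prime _ hp]
  have hcard := Nat.card_filter_dvd_le_factorization_prod univ (fun r _ => vertexNum_ne_zero n r) hp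
  have hu1 : u.factorization p ≤ 1 := (hsq j).natFactorization_le_one p
  have hL1 : L.factorization p ≤ 1 := hLsq.natFactorization_le_one p
  have hpu (h : 0 < u.factorization p) : p ∣ n j := Nat.dvd_of_factorization_pos h.ne'
  have hpL (h : 0 < L.factorization p) : ∃ a ≠ j, p ∣ n a := by
    rw [Finset.factorization_lcm fun a _ => (n a).ne_zero] at h
    obtain ⟨a, ha, hpa⟩ := Finset.lt_sup_iff.1 h
    exact ⟨a, (mem_erase.1 ha).1, Nat.dvd_of_factorization_pos hpa.ne'⟩
  have hu2 (h : 0 < u.factorization p) := two_le_card_dvd_vertexNum hE (hpu h)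
  have hL2 (h : 0 < L.factorization p) : 2 ≤ #{r | p ∣ vertexNum v E n r} := by
    obtain ⟨a, -, hpa⟩ := hpL h
    exact two_le_card_dvd_vertexNum hE hpa
  have h3 (hu : 0 < u.factorization p) (hL : 0 < L.factorization p) :
      3 ≤ #{r | p ∣ vertexNum v E n r} := by
    obtain ⟨a, haj, hpa⟩ := hpL hL
    exact three_le_card_dvd_vertexNum hE haj hpa (hpu hu)
  simp only [Nat.factorization_mul (mul_ne_zero hu hL) (Nat.lcm_ne_zero hu hL),
    Nat.factorization_mul hu hL, Nat.factorization_lcm hu hL, Finsupp.add_apply,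
    Finsupp.sup_apply]
  omega

end VertexNumbering

/-- The majorant of the contribution of a squarefree numbering with `n_j = u > x` whose other
numbers have lcm `L`. -/
def lcmWeight (x : ℝ) (u L : ℕ) : ℝ≥0∞ :=
  if x < u ∧ Squarefree L then ENNReal.ofReal ((u * L * Nat.lcm u L : ℕ) : ℝ)⁻¹ else 0

theorem card_divisors_pow_mul_lcmWeight_le {c : ℕ} {K : ℝ}
    (hK : ∀ n : ℕ, Squarefree n → (#n.divisors : ℝ) ^ c ≤ K * √n) {x : ℝ} (hx : 0 ≤ x)
    (u L : ℕ) :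
    (#L.divisors : ℝ≥0∞) ^ c * lcmWeight x u L ≤
      ∑' t : ℕ, ENNReal.ofReal (K * t) *
        (if x < u ∧ t ∣ u then ENNReal.ofReal ((u : ℝ) ^ 2)⁻¹ else 0) *
        (if t ∣ L then ENNReal.ofReal ((L : ℝ) ^ (-(3 / 2) : ℝ)) else 0) := by
  unfold lcmWeight
  split_ifs with h
  swap
  · simp
  obtain ⟨hxu, hL⟩ := h
  have hu : (0 : ℝ) < u := hx.trans_lt hxu
  have hLpos : 0 < L := Nat.pos_of_ne_zero hL.ne_zero
  have hg : (0 : ℝ) < Nat.gcd u L := Nat.cast_pos.2 (Nat.gcd_pos_of_pos_right u hLpos)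
  have hlcm : ((u * L * Nat.lcm u L : ℕ) : ℝ) = u ^ 2 * L ^ 2 / Nat.gcd u L := by
    rw [eq_div_iff hg.ne', ← Nat.cast_mul, mul_assoc, mul_comm (Nat.lcm u L), Nat.gcd_mul_lcm]
    push_cast; ring
  have hrpow : (L : ℝ) ^ (-(3 / 2) : ℝ) = √L / L ^ 2 := by
    rw [show (-(3 / 2) : ℝ) = 1 / 2 - (2 : ℕ) by norm_num, Real.rpow_sub (Nat.cast_pos.2 hLpos),
      Real.rpow_natCast, Real.sqrt_eq_rpow]
  refine le_trans ?_ (ENNReal.le_tsum (Nat.gcd u L))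
  have hd : (#L.divisors : ℝ≥0∞) ^ c = ENNReal.ofReal ((#L.divisors : ℝ) ^ c) := by
    rw [ENNReal.ofReal_pow (Nat.cast_nonneg _), ENNReal.ofReal_natCast]
  rw [if_pos ⟨hxu, Nat.gcd_dvd_left u L⟩, if_pos (Nat.gcd_dvd_right u L), hd,
    ← ENNReal.ofReal_mul' (by positivity),
    ← ENNReal.ofReal_mul' (by positivity), ← ENNReal.ofReal_mul' (by positivity)]
  refine ENNReal.ofReal_le_ofReal ?_
  rw [hlcm, hrpow]
  calc (#L.divisors : ℝ) ^ c * ((u : ℝ) ^ 2 * L ^ 2 / Nat.gcd u L)⁻¹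
      ≤ K * √L * ((u : ℝ) ^ 2 * L ^ 2 / Nat.gcd u L)⁻¹ := by gcongr; exact hK L hL
    _ = K * Nat.gcd u L * ((u : ℝ) ^ 2)⁻¹ * (√L / L ^ 2) := by field_simp

theorem tsum_inv_sq_dvd_mul_tsum_rpow_dvd_le {x : ℝ} (hx : 0 < x) (K : ℝ) (t : ℕ) :
    ENNReal.ofReal (K * t) *
        (∑' u : ℕ, if x < u ∧ t ∣ u then ENNReal.ofReal ((u : ℝ) ^ 2)⁻¹ else 0) *
        (∑' L : ℕ, if t ∣ L then ENNReal.ofReal ((L : ℝ) ^ (-(3 / 2) : ℝ)) else 0) ≤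
      ENNReal.ofReal (2 * K / x) * ENNReal.ofReal ((t : ℝ) ^ (-(3 / 2) : ℝ)) *
        ∑' m : ℕ, ENNReal.ofReal ((m : ℝ) ^ (-(3 / 2) : ℝ)) := by
  rcases eq_or_ne t 0 with rfl | ht
  · simp
  rw [ENNReal.tsum_ofReal_rpow_dvd ht, ← mul_assoc]
  gcongr
  calc ENNReal.ofReal (K * t) *
        ∑' u : ℕ, (if x < u ∧ t ∣ u then ENNReal.ofReal ((u : ℝ) ^ 2)⁻¹ else 0)
      ≤ ENNReal.ofReal (K * t) * ENNReal.ofReal (2 / (t * x)) := by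
        gcongr; exact ENNReal.tsum_ofReal_inv_sq_dvd_tail_le ht hx
    _ = ENNReal.ofReal (2 * K / x) := by
        rw [← ENNReal.ofReal_mul' (by positivity)]
        congr 1
        field_simp

theorem exists_tsum_card_divisors_pow_mul_lcmWeight_le (c : ℕ) :
    ∃ C : ℝ, 0 ≤ C ∧ ∀ x : ℝ, 0 < x →
      ∑' p : ℕ × ℕ, (#p.2.divisors : ℝ≥0∞) ^ c * lcmWeight x p.1 p.2 ≤ ENNReal.ofReal (C / x) := by
  obtain ⟨K, hK0, hK⟩ := exists_card_divisors_pow_le_mul_sqrt c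
  set ζ := ∑' m : ℕ, (m : ℝ) ^ (-(3 / 2) : ℝ)
  have hζ0 : 0 ≤ ζ := tsum_nonneg fun _ => by positivity
  have hζ : ∑' m : ℕ, ENNReal.ofReal ((m : ℝ) ^ (-(3 / 2) : ℝ)) = ENNReal.ofReal ζ :=
    (ENNReal.ofReal_tsum_of_nonneg (fun _ => by positivity)
      (Real.summable_nat_rpow.2 (by norm_num))).symm
  refine ⟨2 * K * ζ ^ 2, by positivity, fun x hx => ?_⟩
  calc ∑' p : ℕ × ℕ, (#p.2.divisors : ℝ≥0∞) ^ c * lcmWeight x p.1 p.2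
      ≤ ∑' p : ℕ × ℕ, ∑' t : ℕ, ENNReal.ofReal (K * t) *
          (if x < p.1 ∧ t ∣ p.1 then ENNReal.ofReal ((p.1 : ℝ) ^ 2)⁻¹ else 0) *
          (if t ∣ p.2 then ENNReal.ofReal ((p.2 : ℝ) ^ (-(3 / 2) : ℝ)) else 0) :=
        ENNReal.tsum_le_tsum fun p => card_divisors_pow_mul_lcmWeight_le hK hx.le p.1 p.2
    _ = ∑' t : ℕ, ENNReal.ofReal (K * t) *
          (∑' u : ℕ, if x < u ∧ t ∣ u then ENNReal.ofReal ((u : ℝ) ^ 2)⁻¹ else 0) *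
          (∑' L : ℕ, if t ∣ L then ENNReal.ofReal ((L : ℝ) ^ (-(3 / 2) : ℝ)) else 0) := by
        rw [ENNReal.tsum_prod', (tsum_congr fun u => ENNReal.tsum_comm).trans ENNReal.tsum_comm]
        simp only [ENNReal.tsum_mul_left, ENNReal.tsum_mul_right]
    _ ≤ ∑' t : ℕ, ENNReal.ofReal (2 * K / x) * ENNReal.ofReal ((t : ℝ) ^ (-(3 / 2) : ℝ)) *
          ENNReal.ofReal ζ := by
        rw [← hζ]
        exact ENNReal.tsum_le_tsum (tsum_inv_sq_dvd_mul_tsum_rpow_dvd_le hx K)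
    _ = ENNReal.ofReal (2 * K * ζ ^ 2 / x) := by
        rw [ENNReal.tsum_mul_right, ENNReal.tsum_mul_left, hζ, ← ENNReal.ofReal_mul' hζ0,
          ← ENNReal.ofReal_mul' hζ0]
        congr 1
        ring

section EdgeNumberingSum

variable {v : ℕ} {E : Finset (Sym2 (Fin v))}

theorem abs_prod_moebius_mul_prod_inv_vertexNum_le (hE : ∀ a ∈ E, ¬ a.IsDiag) (j : E)
    (n : E → ℕ+) :
    |∏ a, (ArithmeticFunction.moebius (n a : ℕ) : ℝ)| * ∏ r, 1 / (vertexNum v E n r : ℝ) ≤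
      if ∀ a, Squarefree (n a : ℕ) then
        (((n j : ℕ) * (univ.erase j).lcm (fun a => (n a : ℕ)) *
          Nat.lcm (n j) ((univ.erase j).lcm fun a => (n a : ℕ)) : ℕ) : ℝ)⁻¹
      else 0 := by
  split_ifs with hsq
  · have hμ : |∏ a, (ArithmeticFunction.moebius (n a : ℕ) : ℝ)| = 1 := by
      rw [abs_prod]
      exact prod_eq_one fun a _ => by
        exact_mod_cast ArithmeticFunction.abs_moebius_eq_one_of_squarefree (hsq a)
    rw [hμ, one_mul]
    simp only [one_div]
    rw [prod_inv_distrib, ← Nat.cast_prod]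
    have hP := prod_vertexNum_pos n
    have hdvd := mul_mul_lcm_dvd_prod_vertexNum hE j hsq
    exact inv_anti₀ (Nat.cast_pos.2 (Nat.pos_of_dvd_of_pos hdvd hP))
      (Nat.cast_le.2 (Nat.le_of_dvd hP hdvd))
  · obtain ⟨a, ha⟩ := not_forall.1 hsq
    rw [prod_eq_zero (mem_univ a)
      (by simp [ArithmeticFunction.moebius_eq_zero_of_not_squarefree ha])]
    simp

theorem tsum_ofReal_le_tsum_card_divisors_pow_mul_lcmWeight (hE : ∀ a ∈ E, ¬ a.IsDiag) (j : E)
    (x : ℝ) :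
    ∑' m : {n : E → ℕ+ // x < ((n j : ℕ) : ℝ)},
        ENNReal.ofReal (|∏ a, (ArithmeticFunction.moebius (m.1 a : ℕ) : ℝ)| *
          ∏ r, 1 / (vertexNum v E m.1 r : ℝ)) ≤
      ∑' p : ℕ × ℕ, (#p.2.divisors : ℝ≥0∞) ^ Fintype.card {a : E // a ≠ j} *
        lcmWeight x p.1 p.2 := by
  let L : (E → ℕ+) → ℕ := fun n => (univ.erase j).lcm fun a => (n a : ℕ)
  let ι : {n : E → ℕ+ // x < ((n j : ℕ) : ℝ)} → (ℕ × ℕ) × ({a : E // a ≠ j} → ℕ) :=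
    fun m => (((m.1 j : ℕ), L m.1), fun b => (m.1 b.1 : ℕ))
  have hι : Function.Injective ι := by
    intro m₁ m₂ h
    simp only [ι, Prod.mk.injEq, funext_iff] at h
    refine Subtype.ext (funext fun a => PNat.coe_injective ?_)
    by_cases ha : a = j
    · exact ha ▸ h.1.1
    · exact h.2 ⟨a, ha⟩
  let G : (ℕ × ℕ) × ({a : E // a ≠ j} → ℕ) → ℝ≥0∞ := fun z =>
    if ∀ b, z.2 b ∈ z.1.2.divisors then lcmWeight x z.1.1 z.1.2 else 0
  calc _ ≤ ∑' m, G (ι m) := ENNReal.tsum_le_tsum fun m => ?_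
    _ ≤ ∑' z, G z := ENNReal.tsum_comp_le_tsum_of_injective hι G
    _ = _ := by
      rw [ENNReal.tsum_prod']
      simp only [G, ENNReal.tsum_ite_forall_mem]
  refine (ENNReal.ofReal_le_ofReal (abs_prod_moebius_mul_prod_inv_vertexNum_le hE j m.1)).trans ?_
  split_ifs with hsq
  · have hLsq : Squarefree (L m.1) := Nat.squarefree_finsetLcm fun a _ => hsq a
    have hdiv (b : {a : E // a ≠ j}) : (m.1 b : ℕ) ∈ (L m.1).divisors :=
      Nat.mem_divisors.2 ⟨dvd_lcm (mem_erase.2 ⟨b.2, mem_univ _⟩), hLsq.ne_zero⟩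
    simp only [G, ι, if_pos hdiv, lcmWeight, if_pos (And.intro m.2 hLsq)]
    rfl
  · simp

end EdgeNumberingSum

/-- For a graph with at least one edge and a fixed edge `j ∈ E`,
there exist `C > 0` and a positive integer `w`, depending only on the graph, such that
for all `x ≥ 3` the sum of `|μ(n_1) ⋯ μ(n_e)| ∏_{r=1}^{v} 1/N_r` over all edge numberings
with `n_j > x` is at most `C (log log x)^w / x`. -/
theorem stmt15 (v : ℕ) (E : Finset (Sym2 (Fin v))) (hE : ∀ a ∈ E, ¬ a.IsDiag)
    (j : {a : Sym2 (Fin v) // a ∈ E}) :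
    ∃ C : ℝ, 0 < C ∧ ∃ w : ℕ, 0 < w ∧ ∀ x : ℝ, 3 ≤ x →
      (∑' m : {n : {a : Sym2 (Fin v) // a ∈ E} → ℕ+ // x < ((n j : ℕ) : ℝ)},
          |∏ a, (ArithmeticFunction.moebius (m.1 a : ℕ) : ℝ)| *
            ∏ r, 1 / (vertexNum v E m.1 r : ℝ))
        ≤ C * Real.log (Real.log x) ^ w / x := by
  obtain ⟨C, hC0, hC⟩ :=
    exists_tsum_card_divisors_pow_mul_lcmWeight_le (Fintype.card {a : E // a ≠ j})
  have hlog3 : 1 < Real.log 3 :=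
    (Real.lt_log_iff_exp_lt (by norm_num)).2 (Real.exp_one_lt_d9.trans (by norm_num))
  set δ := Real.log (Real.log 3)
  have hδ : 0 < δ := Real.log_pos hlog3
  refine ⟨(C + 1) / δ, by positivity, 1, one_pos, fun x hx => ?_⟩
  have hx0 : 0 < x := by linarith
  have hδx : δ ≤ Real.log (Real.log x) :=
    Real.log_le_log (by linarith) (Real.log_le_log (by norm_num) hx)
  calc _ ≤ C / x :=
        Real.tsum_le_of_tsum_ofReal_le (fun m => by positivity) (by positivity)
          ((tsum_ofReal_le_tsum_card_divisors_pow_mul_lcmWeight hE j x).trans (hC x hx0))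
    _ ≤ (C + 1) / δ * Real.log (Real.log x) ^ 1 / x := by
        gcongr
        calc C ≤ (C + 1) / δ * δ := by rw [div_mul_cancel₀ _ hδ.ne']; linarith
          _ ≤ (C + 1) / δ * Real.log (Real.log x) ^ 1 := by rw [pow_one]; gcongr
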